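/- Let Λ be a finite-dimensional selfinjective algebra and Q a finite acyclic quiver with s arrows, ordered as α_s, …, α_1 so that for i > j there is no path from t(α_i) to s(α_j). Then for every ΛQ-module M, the module Mono(M) = Mono_{α_1}(…Mono_{α_s}(M)…) is a separated monic (hence Gorenstein-projective) representation, and the epimorphism Mono(M) → M is a right approximation of M in Gproj ΛQ. -/

import Mathlib

open Function LinearMap

/-- A representation of the quiver with vertex set `V` and arrow family `E`
over the ring `Λ`: a `Λ`-module at every vertex and a linear map along every arrow. -/
structure QRep (Λ : Type) [Ring Λ] {V : Type} (E : V → V → Type) : Type 1 where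
  obj : V → Type
  [acg : ∀ i, AddCommGroup (obj i)]
  [mod : ∀ i, Module Λ (obj i)]
  map : ∀ {i j : V}, E i j → (obj i →ₗ[Λ] obj j)

attribute [instance] QRep.acg QRep.mod

namespace QRep

variable {Λ : Type} [Ring Λ] {V : Type} {E : V → V → Type}

/-- Morphisms of representations. -/
@[ext]
structure Hom (X Y : QRep Λ E) where
  app : ∀ i, X.obj i →ₗ[Λ] Y.obj i
  comm : ∀ {i j : V} (a : E i j), (Y.map a).comp (app i) = (app j).comp (X.map a)

def Hom.id (X : QRep Λ E) : Hom X X :=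
  ⟨fun _ => LinearMap.id, fun _ => by ext; rfl⟩

def Hom.comp {X Y Z : QRep Λ E} (g : Hom Y Z) (f : Hom X Y) : Hom X Z :=
  ⟨fun i => (g.app i).comp (f.app i), fun {i j} a => by
    ext x
    have h1 := LinearMap.congr_fun (f.comm a) x
    have h2 := LinearMap.congr_fun (g.comm a) (f.app i x)
    simp only [LinearMap.comp_apply] at h1 h2 ⊢
    rw [h2, h1]⟩

def Hom.sub {X Y : QRep Λ E} (f g : Hom X Y) : Hom X Y :=
  ⟨fun i => f.app i - g.app i, fun {i j} a => by
    ext x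
    have h1 := LinearMap.congr_fun (f.comm a) x
    have h2 := LinearMap.congr_fun (g.comm a) x
    simp only [LinearMap.comp_apply, LinearMap.sub_apply, map_sub] at h1 h2 ⊢
    rw [h1, h2]⟩

/-- Two representations are isomorphic. -/
def Iso (X Y : QRep Λ E) : Prop :=
  ∃ f : Hom X Y, ∀ i, Function.Bijective (f.app i)

/-- The assembled map `⊕_{a : j → i} X_j → X_i` at a vertex `i`. -/
noncomputable def uMap (X : QRep Λ E) (i : V) :
    (DirectSum (Σ j : V, E j i) (fun a => X.obj a.1)) →ₗ[Λ] X.obj i := by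
  classical exact DirectSum.toModule Λ _ _ (fun a => X.map a.2)

/-- A representation is separated monic if at every vertex the assembled map
from the direct sum of the incoming branches is injective. -/
def SeparatedMonic (X : QRep Λ E) : Prop :=
  ∀ i : V, Function.Injective (X.uMap i)

/-- Paths in the quiver given by the arrow family `E`. -/
def Path (E : V → V → Type) (i j : V) : Type := @Quiver.Path V ⟨E⟩ i j

/-- The quiver is acyclic: no nontrivial oriented cycles. -/
def Acyclic (E : V → V → Type) : Prop :=
  ∀ i : V, ∀ p : Path E i i, p = @Quiver.Path.nil V ⟨E⟩ i

/-- The representation `P_n(A) = A ⊗ P(n)`: at vertex `i` a copy of `A` for every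
path from `n` to `i`. -/
noncomputable def Pn (Λ : Type) [Ring Λ] (E : V → V → Type) (n : V) (A : Type)
    [AddCommGroup A] [Module Λ A] : QRep Λ E where
  obj i := Path E n i →₀ A
  map {i j} a := Finsupp.lmapDomain A Λ (fun p => @Quiver.Path.cons V ⟨E⟩ n i j p a)

/-- Projectivity of a representation, via the lifting property against
componentwise surjections of representations. -/
def Projective (P : QRep Λ E) : Prop :=
  ∀ (X Y : QRep Λ E) (g : Hom X Y), (∀ i, Function.Surjective (g.app i)) →
    ∀ f : Hom P Y, ∃ f' : Hom P X, g.comp f' = f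

/-- A module has no nonzero projective direct summand. -/
def NoProjSummand (Λ : Type) [Ring Λ] (M : Type) [AddCommGroup M] [Module Λ M] : Prop :=
  ∀ (P C : Type) [AddCommGroup P] [Module Λ P] [AddCommGroup C] [Module Λ C],
    Module.Projective Λ P → Nonempty (M ≃ₗ[Λ] P × C) → Subsingleton P

/-- A module has no nonzero injective direct summand. -/
def NoInjSummand (Λ : Type) [Ring Λ] (M : Type) [AddCommGroup M] [Module Λ M] : Prop :=
  ∀ (P C : Type) [AddCommGroup P] [Module Λ P] [AddCommGroup C] [Module Λ C],
    Module.Injective Λ P → Nonempty (M ≃ₗ[Λ] P × C) → Subsingleton P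

/-- A linear map factors through an injective module. -/
def FactorsThroughInjective (Λ : Type) [Ring Λ] {A B : Type}
    [AddCommGroup A] [Module Λ A] [AddCommGroup B] [Module Λ B] (f : A →ₗ[Λ] B) : Prop :=
  ∃ (J : Type) (_ : AddCommGroup J) (_ : Module Λ J), Module.Injective Λ J ∧
    ∃ (g : A →ₗ[Λ] J) (h : J →ₗ[Λ] B), f = h.comp g

/-- A morphism of representations factors through a projective representation. -/
def FactorsThroughProjective {X Y : QRep Λ E} (f : Hom X Y) : Prop :=
  ∃ (P : QRep Λ E), Projective P ∧ SeparatedMonic P ∧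
    ∃ (u : Hom X P) (v : Hom P Y), f = v.comp u

/-- Stable isomorphism: isomorphism in the stable category of Gorenstein-projective
representations modulo projectives. -/
def StIso (X Y : QRep Λ E) : Prop :=
  ∃ (f : Hom X Y) (g : Hom Y X),
    FactorsThroughProjective ((g.comp f).sub (Hom.id X)) ∧
    FactorsThroughProjective ((f.comp g).sub (Hom.id Y))

/-- `e : M →ₗ J` is an injective envelope: `J` is injective, `e` is injective and
its image is essential in `J`. -/
def IsInjEnvelope {M J : Type} [AddCommGroup M] [Module Λ M] [AddCommGroup J]
    [Module Λ J] (e : M →ₗ[Λ] J) : Prop :=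
  Module.Injective Λ J ∧ Function.Injective e ∧
    ∀ W : Submodule Λ J, Disjoint W (LinearMap.range e) → W = ⊥

end QRep
section MonoACons

variable {Λ : Type} [Ring Λ] {V : Type} {E : V → V → Type}

open QRep

namespace QRep

open Classical in
/-- The map `E_β` in the `Mono_α` construction: it is `single nil ∘ e` when `β = α`
and zero otherwise. -/
noncomputable def EMap (M : QRep Λ E) {v w : V} (α : E v w) {J : Type} [AddCommGroup J]
    [Module Λ J] (e : M.obj v →ₗ[Λ] J) {i j : V} (β : E i j) :
    M.obj i →ₗ[Λ] (Path E w j →₀ J) :=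
  if h : (⟨i, ⟨j, β⟩⟩ : Σ a : V, Σ b : V, E a b) = ⟨v, ⟨w, α⟩⟩ then by
    obtain ⟨h1, h2⟩ := Sigma.mk.inj_iff.mp h
    subst h1
    obtain ⟨h3, _⟩ := Sigma.mk.inj_iff.mp (eq_of_heq h2)
    subst h3
    exact (Finsupp.lsingle (R := Λ) (M := J) (@Quiver.Path.nil V ⟨E⟩ _)).comp e
  else 0

/-- The construction `Mono_α(M)`: the middle term of the componentwise split short
exact sequence `0 → P_w(J) → Mono_α(M) → M → 0` twisted by `e` at the arrow `α`. -/
noncomputable def MonoA (M : QRep Λ E) {v w : V} (α : E v w) {J : Type} [AddCommGroup J]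
    [Module Λ J] (e : M.obj v →ₗ[Λ] J) : QRep Λ E where
  obj i := M.obj i × (Path E w i →₀ J)
  map {i j} β := LinearMap.prod
    ((M.map β).comp (LinearMap.fst Λ _ _))
    ((Finsupp.lmapDomain J Λ (fun p => @Quiver.Path.cons V ⟨E⟩ w i j p β)).comp
        (LinearMap.snd Λ _ _)
      + (EMap M α e β).comp (LinearMap.fst Λ _ _))

/-- The canonical projection `Mono_α(M) → M`. -/
noncomputable def MonoAProj (M : QRep Λ E) {v w : V} (α : E v w) {J : Type} [AddCommGroup J]
    [Module Λ J] (e : M.obj v →ₗ[Λ] J) : Hom (MonoA M α e) M :=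
  ⟨fun _ => LinearMap.fst Λ _ _, fun {i j} β => by ext x; rfl⟩

/-- `IsMonoIter L M N π` holds when `N`, together with the projection `π : N → M`,
is obtained from `M` by successively applying the `Mono` construction at the arrows in
the list `L` (the head of `L` applied last), each time using an injective envelope. -/
inductive IsMonoIter : ∀ (L : List (Σ i : V, Σ j : V, E i j)) (M N : QRep Λ E), Hom N M → Prop
  | nil (M : QRep Λ E) : IsMonoIter [] M M (Hom.id M)
  | cons {L : List (Σ i : V, Σ j : V, E i j)} {M N : QRep Λ E} {π : Hom N M} {v w : V}
      (α : E v w) {J : Type} [AddCommGroup J] [Module Λ J] (e : N.obj v →ₗ[Λ] J)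
      (henv : IsInjEnvelope e) (h : IsMonoIter L M N π) :
      IsMonoIter (⟨v, ⟨w, α⟩⟩ :: L) M (MonoA N α e) (π.comp (MonoAProj N α e))

/-- `π : G → M` is a right approximation of `M` in the category of
Gorenstein-projective (= separated monic) representations. -/
def IsRightApprox {G M : QRep Λ E} (π : Hom G M) : Prop :=
  SeparatedMonic G ∧
    ∀ G' : QRep Λ E, SeparatedMonic G' → ∀ f : Hom G' M, ∃ g : Hom G' G, π.comp g = f

/-- `π : A → M` is the minimal right approximation of `M` in Gproj. -/
def IsMimo {M A : QRep Λ E} (π : Hom A M) : Prop :=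
  IsRightApprox π ∧ ∀ φ : Hom A A, π.comp φ = π → ∀ i, Function.Bijective (φ.app i)

end QRep
end MonoACons
namespace QRep

variable {Λ : Type} [Ring Λ] {V : Type} {E : V → V → Type}

/-- The reflected quiver `Q(v)`: every arrow ending at `v` is reversed. An arrow
`i → j` of `Q(v)` is either an arrow `i → j` of `Q` with `j ≠ v`, or the reversal
of an arrow `j → v` of `Q` (in which case `i = v`). -/
def reflE (E : V → V → Type) (v : V) : V → V → Type :=
  fun i j => {a : E i j // j ≠ v} ⊕ (PLift (i = v) × E j v)

/-- The representation `X'(v)` of the reflected quiver: the branch at `v` is replaced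
by `Ω`, the structure maps at the reversed arrows being the components of `kmap`. -/
noncomputable def reflRep (X : QRep Λ E) (v : V) (hsink : ∀ j, IsEmpty (E v j))
    (Ω : Type) [AddCommGroup Ω] [Module Λ Ω]
    (kmap : Ω →ₗ[Λ] DirectSum (Σ j : V, E j v) (fun a => X.obj a.1)) :
    QRep Λ (reflE E v) where
  obj i := (PLift (i = v) → Ω) × (PLift (i ≠ v) → X.obj i)
  map {i j} a :=
    match a with
    | Sum.inl ⟨a, _⟩ => LinearMap.prod 0
        (LinearMap.pi fun _ : PLift (j ≠ v) =>
          (X.map a).comp ((LinearMap.proj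
            (⟨fun h => (hsink j).false (h ▸ a)⟩ : PLift (i ≠ v))).comp
              (LinearMap.snd Λ _ _)))
    | Sum.inr ⟨hiv, a⟩ => LinearMap.prod 0
        (LinearMap.pi fun _ : PLift (j ≠ v) =>
          (((DirectSum.component Λ (Σ j : V, E j v) (fun b => X.obj b.1) ⟨j, a⟩).comp
              kmap).comp ((LinearMap.proj hiv).comp (LinearMap.fst Λ _ _))))

/-- The reflection relation: `Z` is (the result of) the reflection `X(v)` of the
Gorenstein-projective representation `X` at the sink `v`; it is obtained from the
representation `X'(v)` (defined via a projective cover `δ : C → coker u_X` with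
kernel `Ω` and the lifted kernel map `kmap`) by the `Mono` construction at all
reversed arrows. -/
def IsReflectionAt (X : QRep Λ E) (v : V) (hsink : ∀ j, IsEmpty (E v j))
    (Z : QRep Λ (reflE E v)) : Prop :=
  ∃ (Xbar : Type) (_ : AddCommGroup Xbar) (_ : Module Λ Xbar) (πc : X.obj v →ₗ[Λ] Xbar)
    (C : Type) (_ : AddCommGroup C) (_ : Module Λ C) (δ : C →ₗ[Λ] Xbar)
    (kmap : ↥(LinearMap.ker δ) →ₗ[Λ] DirectSum (Σ j : V, E j v) (fun a => X.obj a.1))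
    (t : C →ₗ[Λ] X.obj v),
    Function.Surjective πc ∧ LinearMap.ker πc = LinearMap.range (X.uMap v) ∧
    Module.Projective Λ C ∧ Function.Surjective δ ∧
    (∀ W : Submodule Λ C, W ⊔ LinearMap.ker δ = ⊤ → W = ⊤) ∧
    πc.comp t = δ ∧ (X.uMap v).comp kmap = t.comp (LinearMap.ker δ).subtype ∧
    ∃ (L : List (Σ i : V, Σ j : V, reflE E v i j))
      (π : Hom Z (reflRep X v hsink (↥(LinearMap.ker δ)) kmap)),
      (∀ x ∈ L, x.1 = v) ∧ L.Nodup ∧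
      (∀ (j : V) (a : E j v),
        (⟨v, j, Sum.inr ⟨⟨rfl⟩, a⟩⟩ : Σ i : V, Σ j : V, reflE E v i j) ∈ L) ∧
      IsMonoIter L (reflRep X v hsink (↥(LinearMap.ker δ)) kmap) Z π

/-- Transport of a representation along a family of bijections of arrow types. -/
def transport {E' : V → V → Type} (σ : ∀ i j, E i j ≃ E' i j) (X : QRep Λ E) :
    QRep Λ E' where
  obj := X.obj
  map {i j} a := X.map ((σ i j).symm a)

/-- `A'` is a (representation-level) syzygy of `A` in the Frobenius category of
Gorenstein-projective representations. -/
def IsSyzRep (A' A : QRep Λ E) : Prop :=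
  ∃ (P : QRep Λ E) (ι : Hom A' P) (π : Hom P A), Projective P ∧ SeparatedMonic P ∧
    (∀ i, Function.Injective (ι.app i)) ∧ (∀ i, Function.Surjective (π.app i)) ∧
    (∀ i, LinearMap.range (ι.app i) = LinearMap.ker (π.app i))

/-- `C` is a double syzygy `Ω²(A)`. -/
def IsOmega2 (A C : QRep Λ E) : Prop :=
  ∃ A', IsSyzRep A' A ∧ IsSyzRep C A'

end QRep

open CategoryTheory

/-- The category of Gorenstein-projective (= separated monic) representations. -/
def GP (Λ : Type) [Ring Λ] {V : Type} (E : V → V → Type) : Type 1 :=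
  {X : QRep Λ E // QRep.SeparatedMonic X}

instance (Λ : Type) [Ring Λ] {V : Type} (E : V → V → Type) :
    Category (GP Λ E) where
  Hom X Y := QRep.Hom X.1 Y.1
  id X := QRep.Hom.id X.1
  comp f g := g.comp f
  id_comp f := by apply QRep.Hom.ext; funext i; exact LinearMap.comp_id _
  comp_id f := by apply QRep.Hom.ext; funext i; exact LinearMap.id_comp _
  assoc f g h := by apply QRep.Hom.ext; funext i; rfl

/-- The relation identifying two morphisms whose difference factors through a
projective object. -/
def stRel (Λ : Type) [Ring Λ] {V : Type} (E : V → V → Type) : HomRel (GP Λ E) :=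
  fun {X Y} f g => QRep.FactorsThroughProjective (f.sub g)

/-- The stable category of Gorenstein-projective representations modulo projectives. -/
def StableGP (Λ : Type) [Ring Λ] {V : Type} (E : V → V → Type) : Type 1 :=
  CategoryTheory.Quotient (stRel Λ E)

noncomputable instance (Λ : Type) [Ring Λ] {V : Type} (E : V → V → Type) :
    Category (StableGP Λ E) :=
  inferInstanceAs (Category (CategoryTheory.Quotient (stRel Λ E)))


/-!
At a vertex `i`, `Mono_α(N)` is `N_i × (paths w → i →₀ J)`. Composed with the assembled map at
`i`, the `J`-coordinate at a path `q` from `w` only sees the branch of the last arrow of `q`: it is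
the coordinate at `q` without that arrow, or `e` on the `α`-branch when `q` is trivial. So if the
assembled map kills an element, all its `J`-parts vanish, and since `e` is injective so does its
`N`-part on the `α`-branch: each step adds `α` to the arrows along which the representation is
separated monic.

A morphism `f : G → N` from a separated monic `G` lifts through `Mono_α(N) → N`: the missing
`J`-coordinates must satisfy the same recursion along paths from `w`, starting from `e ∘ f_v`, and
they are constructed by that recursion, extending along the injective assembled maps of `G` into
the injective module `J`. Acyclicity makes the paths from `w` finitely many, so the coordinates form
a finitely supported function.
-/

namespace Quiver.Path

variable {V : Type*} [Quiver V]

theorem subsingleton_setOf_length_eq_zero (v w : V) :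
    {p : Path v w | p.length = 0}.Subsingleton := by
  rintro (_ | _) hp (_ | _) hq <;> simp_all

theorem finite_setOf_length_le [Finite V] [∀ a b : V, Finite (a ⟶ b)] (v : V) (n : ℕ) :
    ∀ w : V, {p : Path v w | p.length ≤ n}.Finite := by
  induction n with
  | zero => simpa using fun w => (subsingleton_setOf_length_eq_zero v w).finite
  | succ n ih =>
    intro w
    refine ((subsingleton_setOf_length_eq_zero v w).finite.union
      (Set.finite_iUnion fun b => Set.finite_iUnion fun e : b ⟶ w =>
        (ih b).image fun p => p.cons e)).subset ?_
    rintro (_ | ⟨p, e⟩) hp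
    · exact Or.inl rfl
    · exact Or.inr (Set.mem_iUnion₂.2 ⟨_, e, p, by simpa using hp, rfl⟩)

theorem nodup_vertices_of_acyclic (hacyc : ∀ (i : V) (p : Path i i), p = nil) {v : V} :
    ∀ {w : V} (p : Path v w), p.vertices.Nodup
  | _, nil => by simp
  | _, cons p e => by
    rw [vertices_cons, List.nodup_concat]
    refine ⟨fun hx => ?_, nodup_vertices_of_acyclic hacyc p⟩
    obtain ⟨p₁, p₂, -⟩ := exists_eq_comp_of_mem_vertices p hx
    exact cons_ne_nil p₂ e (hacyc _ _)

theorem length_lt_card_of_acyclic [Fintype V] (hacyc : ∀ (i : V) (p : Path i i), p = nil)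
    {v w : V} (p : Path v w) : p.length < Fintype.card V := by
  simpa [vertices_length] using (nodup_vertices_of_acyclic hacyc p).length_le_card

theorem finite_of_acyclic [Finite V] [∀ a b : V, Finite (a ⟶ b)]
    (hacyc : ∀ (i : V) (p : Path i i), p = nil) (v w : V) : Finite (Path v w) := by
  have := Fintype.ofFinite V
  refine Set.finite_univ_iff.1 ((finite_setOf_length_le v (Fintype.card V) w).subset ?_)
  exact fun p _ => (length_lt_card_of_acyclic hacyc p).le

end Quiver.Path

-- Lets `rw` and `simp` identify `Path E` with `@Quiver.Path V ⟨E⟩`.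
attribute [reducible] QRep.Path

theorem And.rec_eq_apply {A B : Prop} {C : Sort*} (f : A → B → C) (p : A ∧ B) :
    (And.rec f p : C) = f p.1 p.2 := by
  cases p; rfl

namespace QRep

open DirectSum

open scoped Classical

variable {Λ : Type} [Ring Λ] {V : Type} {E : V → V → Type}

theorem uMap_lof (X : QRep Λ E) {i j : V} (a : E i j) (x : X.obj i) :
    X.uMap j (lof Λ _ (fun b : Σ k, E k j => X.obj b.1) ⟨i, a⟩ x) = X.map a x :=
  toModule_lof Λ (M := fun b : Σ k, E k j => X.obj b.1) (φ := fun b => X.map b.2)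
    (⟨i, a⟩ : Σ k, E k j) x

theorem Hom.app_uMap {X Y : QRep Λ E} (f : Hom X Y) (j : V)
    (z : ⨁ a : Σ k, E k j, X.obj a.1) :
    f.app j (X.uMap j z) = Y.uMap j (lmap (fun a => f.app a.1) z) := by
  change (f.app j ∘ₗ X.uMap j) z = (Y.uMap j ∘ₗ lmap (fun a => f.app a.1)) z
  congr 1
  refine linearMap_ext Λ fun ⟨i, a⟩ => LinearMap.ext fun x => ?_
  simp only [LinearMap.comp_apply, lmap_lof]
  rw [uMap_lof, uMap_lof]
  exact (LinearMap.congr_fun (f.comm a) x).symm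

def Hom.ofUMap {X Y : QRep Λ E} (F : ∀ i, X.obj i →ₗ[Λ] Y.obj i)
    (hF : ∀ j (z : ⨁ a : Σ k, E k j, X.obj a.1),
      F j (X.uMap j z) = Y.uMap j (lmap (fun a => F a.1) z)) : Hom X Y where
  app := F
  comm {i j} a := LinearMap.ext fun x => by
    have h := hF j (lof Λ _ (fun b : Σ k, E k j => X.obj b.1) ⟨i, a⟩ x)
    rw [lmap_lof, uMap_lof, uMap_lof] at h
    exact h.symm

section MonoA

variable {N : QRep Λ E} {v w : V} (α : E v w) {J : Type} [AddCommGroup J] [Module Λ J]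
  (e : N.obj v →ₗ[Λ] J)

theorem EMap_self : EMap N α e α = Finsupp.lsingle (@Quiver.Path.nil V ⟨E⟩ w) ∘ₗ e := by
  unfold EMap
  simp only [dite_true, And.rec_eq_apply]

theorem EMap_of_ne {i j : V} (β : E i j)
    (h : (⟨i, j, β⟩ : Σ a b : V, E a b) ≠ ⟨v, w, α⟩) : EMap N α e β = 0 := by
  rw [EMap, dif_neg h]

theorem EMap_apply_cons {i j b : V} (β : E i j) (y : N.obj i)
    (p : @Quiver.Path V ⟨E⟩ w b) (γ : E b j) :
    EMap N α e β y (@Quiver.Path.cons V ⟨E⟩ w b j p γ) = 0 := by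
  let _ : Quiver V := ⟨E⟩
  by_cases h : (⟨i, j, β⟩ : Σ a b : V, E a b) = ⟨v, w, α⟩
  · cases h
    rw [EMap_self]
    exact Finsupp.single_eq_of_ne (Quiver.Path.cons_ne_nil p γ)
  · rw [EMap_of_ne α e β h]
    rfl

variable (N) in
noncomputable def MonoA.pathCoord {j : V} (q : @Quiver.Path V ⟨E⟩ w j) :
    (MonoA N α e).obj j →ₗ[Λ] J :=
  Finsupp.lapply q ∘ₗ LinearMap.snd Λ (N.obj j) (Path E w j →₀ J)

theorem MonoA.pathCoord_nil_comp_uMap :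
    MonoA.pathCoord N α e (@Quiver.Path.nil V ⟨E⟩ w) ∘ₗ (MonoA N α e).uMap w =
      e ∘ₗ (MonoAProj N α e).app v ∘ₗ component Λ _ _ (⟨v, α⟩ : Σ k, E k w) := by
  let _ : Quiver V := ⟨E⟩
  refine linearMap_ext Λ fun ⟨i, β⟩ => LinearMap.ext fun y => ?_
  simp only [LinearMap.comp_apply]
  rw [uMap_lof]
  change (Finsupp.mapDomain (fun p => @Quiver.Path.cons V ⟨E⟩ w i w p β) y.2 +
    EMap N α e β y.1) (@Quiver.Path.nil V ⟨E⟩ w) = _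
  rw [Finsupp.add_apply, Finsupp.mapDomain_of_notMem_range _ _
    (by rintro ⟨p, hp⟩; exact Quiver.Path.cons_ne_nil p β hp), zero_add]
  by_cases h : (⟨i, β⟩ : Σ k, E k w) = ⟨v, α⟩
  · cases h
    rw [EMap_self, component.lof_self]
    exact Finsupp.single_eq_same
  · rw [EMap_of_ne α e β fun h' => h (by cases h'; rfl), component.of, dif_neg h, map_zero,
      map_zero]
    rfl

theorem MonoA.pathCoord_cons_comp_uMap {b c : V} (p : @Quiver.Path V ⟨E⟩ w b) (γ : E b c) :
    MonoA.pathCoord N α e (@Quiver.Path.cons V ⟨E⟩ w b c p γ) ∘ₗ (MonoA N α e).uMap c =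
      MonoA.pathCoord N α e p ∘ₗ component Λ _ _ (⟨b, γ⟩ : Σ k, E k c) := by
  let _ : Quiver V := ⟨E⟩
  refine linearMap_ext Λ fun ⟨i, β⟩ => LinearMap.ext fun y => ?_
  simp only [LinearMap.comp_apply]
  rw [uMap_lof]
  change (Finsupp.mapDomain (fun p => @Quiver.Path.cons V ⟨E⟩ w i c p β) y.2 +
    EMap N α e β y.1) (@Quiver.Path.cons V ⟨E⟩ w b c p γ) = _
  rw [Finsupp.add_apply, EMap_apply_cons, add_zero]
  by_cases h : (⟨i, β⟩ : Σ k, E k c) = ⟨b, γ⟩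
  · cases h
    rw [component.lof_self]
    exact Finsupp.mapDomain_apply
      (fun p₁ p₂ hp => eq_of_heq (Quiver.Path.heq_of_cons_eq_cons hp)) _ _
  · rw [component.of, dif_neg h, map_zero]
    refine Finsupp.mapDomain_of_notMem_range _ _ ?_
    rintro ⟨p', hp⟩
    obtain rfl := Quiver.Path.obj_eq_of_cons_eq_cons hp
    obtain rfl := eq_of_heq (Quiver.Path.hom_heq_of_cons_eq_cons hp)
    exact h rfl

end MonoA

def SeparatedMonicOn (X : QRep Λ E) (S : Set (Σ a b : V, E a b)) : Prop :=
  ∀ i (z : ⨁ a : Σ k, E k i, X.obj a.1),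
    (∀ a, (⟨a.1, i, a.2⟩ : Σ a b : V, E a b) ∉ S → z a = 0) → X.uMap i z = 0 → z = 0

theorem separatedMonicOn_empty (X : QRep Λ E) : SeparatedMonicOn X ∅ :=
  fun _ _ hz _ => DFinsupp.ext fun a => hz a (Set.notMem_empty _)

theorem SeparatedMonicOn.separatedMonic {X : QRep Λ E} {S : Set (Σ a b : V, E a b)}
    (hX : SeparatedMonicOn X S) (hS : ∀ i j (a : E i j), ⟨i, j, a⟩ ∈ S) : SeparatedMonic X :=
  fun i => (injective_iff_map_eq_zero _).2 fun z hz =>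
    hX i z (fun _ ha => absurd (hS _ _ _) ha) hz

theorem SeparatedMonicOn.monoA {N : QRep Λ E} {S : Set (Σ a b : V, E a b)}
    (hN : SeparatedMonicOn N S) {v w : V} (α : E v w) {J : Type} [AddCommGroup J]
    [Module Λ J] {e : N.obj v →ₗ[Λ] J} (he : Function.Injective e) :
    SeparatedMonicOn (MonoA N α e) (insert ⟨v, w, α⟩ S) := by
  intro i z hz hzero
  have hsnd : ∀ a, (z a).2 = 0 := fun ⟨b, γ⟩ => Finsupp.ext fun p => by
    have h := LinearMap.congr_fun (MonoA.pathCoord_cons_comp_uMap α e p γ) z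
    rw [LinearMap.comp_apply, hzero, map_zero] at h
    exact h.symm
  have hfst : lmap (fun a => (MonoAProj N α e).app a.1) z = 0 := by
    refine hN i _ (fun ⟨k, β⟩ hk => ?_) ?_
    · by_cases hα : (⟨k, i, β⟩ : Σ a b : V, E a b) = ⟨v, w, α⟩
      · cases hα
        have h := LinearMap.congr_fun (MonoA.pathCoord_nil_comp_uMap α e) z
        rw [LinearMap.comp_apply, hzero, map_zero] at h
        exact he (h.symm.trans e.map_zero.symm)
      · simp [hz ⟨k, β⟩ (by simp [hα, hk])]
    · rw [← Hom.app_uMap, hzero, map_zero]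
  exact DFinsupp.ext fun a => Prod.ext (DFunLike.congr_fun hfst a) (hsnd a)

theorem IsMonoIter.separatedMonicOn {L : List (Σ i : V, Σ j : V, E i j)} {M N : QRep Λ E}
    {π : Hom N M} (hiter : IsMonoIter L M N π) : SeparatedMonicOn N {x | x ∈ L} := by
  induction hiter with
  | nil M => simpa using separatedMonicOn_empty M
  | cons α e henv _ ih => simpa [Set.insert_def] using ih.monoA α henv.2.1

theorem exists_pathCoords {G : QRep Λ E} (hG : SeparatedMonic G) {J : Type} [AddCommGroup J]
    [Module Λ J] [Module.Injective Λ J] {v w : V} (α : E v w) (base : G.obj v →ₗ[Λ] J) :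
    ∃ φ : ∀ j, @Quiver.Path V ⟨E⟩ w j → (G.obj j →ₗ[Λ] J),
      φ w (@Quiver.Path.nil V ⟨E⟩ w) ∘ₗ G.uMap w =
        base ∘ₗ component Λ _ _ (⟨v, α⟩ : Σ k, E k w) ∧
      ∀ {b c : V} (p : @Quiver.Path V ⟨E⟩ w b) (γ : E b c),
        φ c (@Quiver.Path.cons V ⟨E⟩ w b c p γ) ∘ₗ G.uMap c =
          φ b p ∘ₗ component Λ _ _ (⟨b, γ⟩ : Σ k, E k c) := by
  choose ext hext using fun j (ψ : (⨁ a : Σ k, E k j, G.obj a.1) →ₗ[Λ] J) =>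
    Module.Injective.out (G.uMap j) (hG j) ψ
  refine ⟨fun j q => @Quiver.Path.rec V ⟨E⟩ w (fun j _ => G.obj j →ₗ[Λ] J)
      (ext w (base ∘ₗ component Λ _ _ (⟨v, α⟩ : Σ k, E k w)))
      (fun {b c} _ γ φp => ext c (φp ∘ₗ component Λ _ _ (⟨b, γ⟩ : Σ k, E k c))) j q,
    LinearMap.ext (hext _ _), fun _ _ => LinearMap.ext (hext _ _)⟩

theorem exists_lift_monoAProj [Finite V] [∀ i j, Finite (E i j)] (hacyc : Acyclic E)
    {G N : QRep Λ E} (hG : SeparatedMonic G) {v w : V} (α : E v w) {J : Type}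
    [AddCommGroup J] [Module Λ J] [Module.Injective Λ J] (e : N.obj v →ₗ[Λ] J)
    (f : Hom G N) : ∃ g : Hom G (MonoA N α e), (MonoAProj N α e).comp g = f := by
  let _ : Quiver V := ⟨E⟩
  obtain ⟨φ, hnil, hcons⟩ := exists_pathCoords hG α (e ∘ₗ f.app v)
  have := Quiver.Path.finite_of_acyclic hacyc w
  let coords (j : V) : G.obj j →ₗ[Λ] (Quiver.Path w j →₀ J) :=
    (Finsupp.linearEquivFunOnFinite Λ J _).symm.toLinearMap ∘ₗ LinearMap.pi (φ j)
  let F (j : V) : G.obj j →ₗ[Λ] (MonoA N α e).obj j := (f.app j).prod (coords j)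
  refine ⟨Hom.ofUMap F fun j z => ?_, rfl⟩
  refine Prod.ext ?_ (Finsupp.ext fun q => ?_)
  · change f.app j (G.uMap j z) = (MonoAProj N α e).app j _
    rw [Hom.app_uMap, Hom.app_uMap]
    exact congrArg _ (DFinsupp.ext fun _ => rfl)
  · cases q with
    | nil =>
      have h := LinearMap.congr_fun (MonoA.pathCoord_nil_comp_uMap α e) (lmap (fun a => F a.1) z)
      exact (LinearMap.congr_fun hnil z).trans h.symm
    | cons p γ =>
      have h := LinearMap.congr_fun (MonoA.pathCoord_cons_comp_uMap α e p γ)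
        (lmap (fun a => F a.1) z)
      exact (LinearMap.congr_fun (hcons p γ) z).trans h.symm

theorem IsMonoIter.exists_lift [Finite V] [∀ i j, Finite (E i j)] (hacyc : Acyclic E)
    {L : List (Σ i : V, Σ j : V, E i j)} {M N : QRep Λ E} {π : Hom N M}
    (hiter : IsMonoIter L M N π) {G : QRep Λ E} (hG : SeparatedMonic G) (f : Hom G M) :
    ∃ g : Hom G N, π.comp g = f := by
  induction hiter with
  | nil M => exact ⟨f, rfl⟩
  | cons α e henv _ ih =>
    obtain ⟨g, rfl⟩ := ih f
    have := henv.1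
    obtain ⟨g', rfl⟩ := exists_lift_monoAProj hacyc hG α e g
    exact ⟨g', rfl⟩

end QRep

theorem mono_is_separatedMonic_and_right_approximation_general
    (Λ : Type) [Ring Λ]
    {V : Type} [Fintype V] {E : V → V → Type} [∀ i j, Fintype (E i j)]
    (hacyc : QRep.Acyclic E)
    (L : List (Σ i : V, Σ j : V, E i j))
    (hall : ∀ (i j : V) (a : E i j), (⟨i, ⟨j, a⟩⟩ : Σ i : V, Σ j : V, E i j) ∈ L)
    (M N : QRep Λ E)
    (π : QRep.Hom N M) (hiter : QRep.IsMonoIter L M N π) :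
    QRep.SeparatedMonic N ∧ QRep.IsRightApprox π := by
  have hN : QRep.SeparatedMonic N := hiter.separatedMonicOn.separatedMonic hall
  exact ⟨hN, hN, fun _ hG f => hiter.exists_lift hacyc hG f⟩

/-- For an ordering `α_s, …, α_1` of all the arrows of the finite
acyclic quiver `Q` such that for `i > j` there is no path from `t(α_i)` to
`s(α_j)`, the module `Mono(M)` is separated monic (hence Gorenstein-projective),
and the epimorphism `Mono(M) → M` is a right approximation of `M` in `Gproj ΛQ`. -/
theorem mono_is_separatedMonic_and_right_approximation
    (k : Type) [Field k] (Λ : Type) [Ring Λ] [Algebra k Λ] [FiniteDimensional k Λ]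
    (hself : Module.Injective Λ Λ)
    {V : Type} [Fintype V] {E : V → V → Type} [∀ i j, Fintype (E i j)]
    (hacyc : QRep.Acyclic E)
    (L : List (Σ i : V, Σ j : V, E i j))
    (hL : L.Pairwise fun x y => IsEmpty (QRep.Path E y.2.1 x.1))
    (hnodup : L.Nodup)
    (hall : ∀ (i j : V) (a : E i j), (⟨i, ⟨j, a⟩⟩ : Σ i : V, Σ j : V, E i j) ∈ L)
    (M N : QRep Λ E) (hfin : ∀ i, Module.Finite Λ (M.obj i))
    (π : QRep.Hom N M) (hiter : QRep.IsMonoIter L M N π) :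
    QRep.SeparatedMonic N ∧ QRep.IsRightApprox π :=
  mono_is_separatedMonic_and_right_approximation_general Λ hacyc L hall M N π hiter
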